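/- (DCA sublinear rate, regime p5.) Let f1 ∈ F_{μ1,L1} and f2 ∈ F_{μ2,L2} with μ1 > −μ2 > 0, L1 > μ2, μ1 < L1, μ2 < L2, L2 > 0, and max{ (1/L1)·(2 + L2/μ2), 0 } < 1/μ1 + 1/μ2 + 1/L2. Let F := f1 − f2, let N ≥ 1, and let x⁰, …, x^N be a DCA sequence with subgradients g1^k ∈ ∂f1(x^k), g2^k ∈ ∂f2(x^k). Then (1/2)·min_{0 ≤ k ≤ N} ‖g1^k − g2^k‖² ≤ (F(x⁰) − F(x^N)) / (p·N), where p = (μ1 + μ2)/μ2². -/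

import Mathlib

open RealInnerProductSpace

variable {H : Type*} [NormedAddCommGroup H] [InnerProductSpace ℝ H]

/-- `f` has lower curvature `μ`, i.e. `f - (μ/2)‖·‖²` is convex. -/
def HasLowerCurvature (μ : ℝ) (f : H → ℝ) : Prop :=
  ConvexOn ℝ Set.univ fun x => f x - μ / 2 * ‖x‖ ^ 2

/-- `f` has upper curvature `L`, i.e. `(L/2)‖·‖² - f` is convex. -/
def HasUpperCurvature (L : ℝ) (f : H → ℝ) : Prop :=
  ConvexOn ℝ Set.univ fun x => L / 2 * ‖x‖ ^ 2 - f x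

/-- `g` is a subgradient of `f` (of lower curvature `μ`) at `x`. -/
def IsSubgradient (μ : ℝ) (f : H → ℝ) (x g : H) : Prop :=
  ∀ y, f y ≥ f x + ⟪g, y - x⟫ + μ / 2 * ‖y - x‖ ^ 2

/-!
Write `d = x^{k+1} - x^k` and `u = g2^{k+1} - g2^k - μ2 d`. The subgradient inequality of `f1` at
`x^{k+1}` (whose subgradient is `g2^k`) and the interpolation inequality of `f2 ∈ F_{μ2,L2}` give
`F(x^k) - F(x^{k+1}) ≥ (μ1 + μ2)/2 ‖d‖² + ‖u‖²/(2(L2 - μ2))`, while cocoercivity of `f2` gives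
`‖u‖²/(L2 - μ2) ≤ ⟪u, d⟫`. Since `g1^{k+1} - g2^{k+1} = -(u + μ2 d)` and `μ2 < 0`, these combine to
`p ‖g1^{k+1} - g2^{k+1}‖² ≤ 2 (F(x^k) - F(x^{k+1}))` as soon as `(μ1 + μ2)(L2 + μ2) ≤ μ2²`, which is
what `1/μ1 + 1/μ2 + 1/L2 > 0` amounts to. Summing over `k` telescopes.
-/

open Filter Set Finset Topology

theorem ConvexOn.add_inner_le_of_le_add_inner_add_sq {h : H → ℝ} (hh : ConvexOn ℝ univ h)
    {x a : H} {C : ℝ} (hC : ∀ v, h (x + v) ≤ h x + ⟪a, v⟫ + C * ‖v‖ ^ 2) (d : H) :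
    h x + ⟪a, d⟫ ≤ h (x + d) := by
  have key : ∀ t > 0, h x + ⟪a, d⟫ - C * t * ‖d‖ ^ 2 ≤ h (x + d) := by
    intro t ht
    have ht1 : (0 : ℝ) < 1 + t := by linarith
    have hx : (t / (1 + t)) • (x + d) + (1 / (1 + t)) • (x + (-t) • d) = x := by
      match_scalars <;> field_simp <;> ring
    have hconv := hh.2 (mem_univ (x + d)) (mem_univ (x + (-t) • d))
      (div_nonneg ht.le ht1.le) (div_nonneg zero_le_one ht1.le) (by field_simp; ring)
    rw [hx, smul_eq_mul, smul_eq_mul] at hconv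
    have hq := hC ((-t) • d)
    rw [real_inner_smul_right, norm_smul, Real.norm_eq_abs, mul_pow, sq_abs] at hq
    have hmul : t * (h x + ⟪a, d⟫ - C * t * ‖d‖ ^ 2) ≤ t * h (x + d) := by
      have := mul_le_mul_of_nonneg_left hconv ht1.le
      rw [mul_add, ← mul_assoc, ← mul_assoc, mul_div_cancel₀ _ ht1.ne',
        mul_div_cancel₀ _ ht1.ne'] at this
      linear_combination this + hq
    exact le_of_mul_le_mul_left hmul ht
  have hlim : Tendsto (fun t => h x + ⟪a, d⟫ - C * t * ‖d‖ ^ 2) (𝓝[>] 0)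
      (𝓝 (h x + ⟪a, d⟫)) := by
    refine tendsto_nhdsWithin_of_tendsto_nhds ?_
    have : Continuous fun t : ℝ => h x + ⟪a, d⟫ - C * t * ‖d‖ ^ 2 := by fun_prop
    simpa using this.tendsto 0
  exact le_of_tendsto hlim (eventually_nhdsWithin_of_forall key)

theorem HasUpperCurvature.le_add_inner_add_sq {μ L : ℝ} {f : H → ℝ}
    (hup : HasUpperCurvature L f) {x g : H} (hg : IsSubgradient μ f x g) (z : H) :
    f z ≤ f x + ⟪g, z - x⟫ + L / 2 * ‖z - x‖ ^ 2 := by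
  have hmodel : ∀ v, L / 2 * ‖x + v‖ ^ 2 - f (x + v) ≤
      L / 2 * ‖x‖ ^ 2 - f x + ⟪L • x - g, v⟫ + (L - μ) / 2 * ‖v‖ ^ 2 := by
    intro v
    have := hg (x + v)
    rw [add_sub_cancel_left] at this
    rw [norm_add_sq_real, inner_sub_left, real_inner_smul_left]
    linarith
  have := hup.add_inner_le_of_le_add_inner_add_sq hmodel (z - x)
  rw [add_sub_cancel, inner_sub_left, real_inner_smul_left] at this
  have hz : ‖z‖ ^ 2 = ‖x‖ ^ 2 + 2 * ⟪x, z - x⟫ + ‖z - x‖ ^ 2 := by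
    rw [← norm_add_sq_real, add_sub_cancel]
  linear_combination this + L / 2 * hz

theorem HasUpperCurvature.interpolation {μ L : ℝ} {f : H → ℝ} (hup : HasUpperCurvature L f)
    (hμL : μ < L) {x y gx gy : H} (hx : IsSubgradient μ f x gx) (hy : IsSubgradient μ f y gy) :
    f x + ⟪gx, y - x⟫ + μ / 2 * ‖y - x‖ ^ 2
      + ‖gy - gx - μ • (y - x)‖ ^ 2 / (2 * (L - μ)) ≤ f y := by
  set e := y - x
  set u := gy - gx - μ • e
  set t := (L - μ)⁻¹
  have ht : (L - μ) * t = 1 := mul_inv_cancel₀ (sub_pos.mpr hμL).ne'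
  -- Compare the lower model at `x` with the upper model at `y` at their best point `y - u/(L-μ)`.
  have hlow := hx (y - t • u)
  have hhigh := hup.le_add_inner_add_sq hy (y - t • u)
  have hzx : y - t • u - x = e - t • u := by simp only [e]; abel
  rw [sub_sub_cancel_left, inner_neg_right, real_inner_smul_right, norm_neg, norm_smul,
    Real.norm_eq_abs, mul_pow, sq_abs] at hhigh
  rw [hzx, inner_sub_right, real_inner_smul_right, norm_sub_sq_real, real_inner_smul_right,
    norm_smul, Real.norm_eq_abs, mul_pow, sq_abs] at hlow
  have hu : ‖u‖ ^ 2 = ⟪gy, u⟫ - ⟪gx, u⟫ - μ * ⟪e, u⟫ := by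
    rw [← real_inner_self_eq_norm_sq]
    simp only [u, inner_sub_left, real_inner_smul_left]
  have hdiv : ‖u‖ ^ 2 / (2 * (L - μ)) = t * ‖u‖ ^ 2 / 2 := by
    simp only [t]; field_simp
  have hq : (L - μ) * (t ^ 2 * ‖u‖ ^ 2) = t * ‖u‖ ^ 2 := by
    linear_combination t * ‖u‖ ^ 2 * ht
  rw [hdiv]
  linear_combination hlow + hhigh + t * hu + 1 / 2 * hq

theorem HasUpperCurvature.norm_sq_div_le_inner {μ L : ℝ} {f : H → ℝ}
    (hup : HasUpperCurvature L f) (hμL : μ < L) {x y gx gy : H}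
    (hx : IsSubgradient μ f x gx) (hy : IsSubgradient μ f y gy) :
    ‖gy - gx - μ • (y - x)‖ ^ 2 / (L - μ) ≤ ⟪gy - gx - μ • (y - x), y - x⟫ := by
  have hxy := hup.interpolation hμL hx hy
  have hyx := hup.interpolation hμL hy hx
  have hneg : gx - gy - μ • (x - y) = -(gy - gx - μ • (y - x)) := by
    rw [← neg_sub y x, smul_neg]; abel
  rw [hneg, norm_neg, ← neg_sub y x, inner_neg_right, norm_neg] at hyx
  rw [inner_sub_left, inner_sub_left, real_inner_smul_left, real_inner_self_eq_norm_sq]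
  have h2 : ‖gy - gx - μ • (y - x)‖ ^ 2 / (L - μ)
      = 2 * (‖gy - gx - μ • (y - x)‖ ^ 2 / (2 * (L - μ))) := by
    field_simp
  linarith

theorem mul_norm_add_smul_sq_le {a c B : ℝ} {u d : H} (ha : 0 ≤ a) (hc : c ≤ 0) (hB : 0 < B)
    (habc : a * (B + 2 * c) ≤ c ^ 2) (hud : ‖u‖ ^ 2 / B ≤ ⟪u, d⟫) :
    a * ‖u + c • d‖ ^ 2 ≤ c ^ 2 * (a * ‖d‖ ^ 2 + ‖u‖ ^ 2 / B) := by
  set q := ‖u‖ ^ 2 / B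
  have hq : 0 ≤ q := by positivity
  have hu : ‖u‖ ^ 2 = B * q := by simp only [q]; field_simp
  rw [norm_add_sq_real, real_inner_smul_right, norm_smul, Real.norm_eq_abs, mul_pow, sq_abs, hu]
  nlinarith [mul_le_mul_of_nonpos_left hud (mul_nonpos_of_nonneg_of_nonpos ha hc),
    mul_le_mul_of_nonneg_right habc hq]

theorem dca_descent_step {μ1 μ2 L2 : ℝ} {f1 f2 : H → ℝ} (h2up : HasUpperCurvature L2 f2)
    (hμ : 0 ≤ μ1 + μ2) (hμ2 : μ2 ≤ 0) (hL2 : μ2 < L2)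
    (hcond : (μ1 + μ2) * (L2 + μ2) ≤ μ2 ^ 2) {x y g g' : H}
    (hg1 : IsSubgradient μ1 f1 y g) (hg2x : IsSubgradient μ2 f2 x g)
    (hg2y : IsSubgradient μ2 f2 y g') :
    (μ1 + μ2) * ‖g - g'‖ ^ 2 ≤ 2 * μ2 ^ 2 * ((f1 x - f2 x) - (f1 y - f2 y)) := by
  set d := y - x
  set u := g' - g - μ2 • d
  have hB : 0 < L2 - μ2 := sub_pos.mpr hL2
  have hf1 := hg1 x
  rw [← neg_sub y x, inner_neg_right, norm_neg] at hf1
  have hdesc : (μ1 + μ2) * ‖d‖ ^ 2 + ‖u‖ ^ 2 / (L2 - μ2)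
      ≤ 2 * ((f1 x - f2 x) - (f1 y - f2 y)) := by
    have hf2 := h2up.interpolation hL2 hg2x hg2y
    have h2 : ‖u‖ ^ 2 / (L2 - μ2) = 2 * (‖u‖ ^ 2 / (2 * (L2 - μ2))) := by field_simp
    linarith
  have hgg : g - g' = -(u + μ2 • d) := by simp only [u]; abel
  calc (μ1 + μ2) * ‖g - g'‖ ^ 2
      ≤ μ2 ^ 2 * ((μ1 + μ2) * ‖d‖ ^ 2 + ‖u‖ ^ 2 / (L2 - μ2)) := by
        rw [hgg, norm_neg]
        exact mul_norm_add_smul_sq_le hμ hμ2 hB (by linarith)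
          (h2up.norm_sq_div_le_inner hL2 hg2x hg2y)
    _ ≤ 2 * μ2 ^ 2 * ((f1 x - f2 x) - (f1 y - f2 y)) := by
        linarith [mul_le_mul_of_nonneg_left hdesc (sq_nonneg μ2)]

theorem mul_add_lt_sq_of_inv_add_inv_add_inv_pos {μ1 μ2 L : ℝ} (hμ1 : 0 < μ1) (hμ2 : μ2 < 0)
    (hL : 0 < L) (h : 0 < 1 / μ1 + 1 / μ2 + 1 / L) : (μ1 + μ2) * (L + μ2) < μ2 ^ 2 := by
  have hprod : μ1 * μ2 * L < 0 := mul_neg_of_neg_of_pos (mul_neg_of_pos_of_neg hμ1 hμ2) hL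
  have hsum : (1 / μ1 + 1 / μ2 + 1 / L) * (μ1 * μ2 * L) = μ2 * L + μ1 * L + μ1 * μ2 := by
    field_simp [hμ1.ne', hμ2.ne]
  nlinarith [mul_neg_of_pos_of_neg h hprod]

theorem mul_inf'_le_of_forall_mul_le_sub {N : ℕ} {c : ℝ} (hc : 0 ≤ c) (e φ : ℕ → ℝ)
    (h : ∀ k < N, c * e (k + 1) ≤ φ k - φ (k + 1)) :
    c * N * (range (N + 1)).inf' (nonempty_range_iff.mpr (Nat.succ_ne_zero N)) e ≤
      φ 0 - φ N :=
  calc c * N * (range (N + 1)).inf' _ e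
      = ∑ _k ∈ range N, c * (range (N + 1)).inf' _ e := by
        rw [sum_const, card_range, nsmul_eq_mul]; ring
    _ ≤ ∑ k ∈ range N, c * e (k + 1) := sum_le_sum fun k hk =>
        mul_le_mul_of_nonneg_left (inf'_le _ (by simp at hk ⊢; omega)) hc
    _ ≤ ∑ k ∈ range N, (φ k - φ (k + 1)) := sum_le_sum fun k hk => h k (mem_range.mp hk)
    _ = φ 0 - φ N := sum_range_sub' φ N

theorem dca_rate_p5_general
    (mu1 mu2 L1 L2 : ℝ)
    (h1 : -mu2 < mu1) (h2 : 0 < -mu2)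
    (h5 : mu2 < L2) (h6 : 0 < L2)
    (h7 : max ((1 / L1) * (2 + L2 / mu2)) 0 < 1 / mu1 + 1 / mu2 + 1 / L2)
    (f1 f2 : H → ℝ)
    (h2up : HasUpperCurvature L2 f2)
    (N : ℕ) (hN : 1 ≤ N) (x g1 g2 : ℕ → H)
    (hg1 : ∀ k ≤ N, IsSubgradient mu1 f1 (x k) (g1 k))
    (hg2 : ∀ k ≤ N, IsSubgradient mu2 f2 (x k) (g2 k))
    (hdca : ∀ k < N, g1 (k + 1) = g2 k) :
    ((1 : ℝ) / 2) * ((Finset.range (N + 1)).inf' (Finset.nonempty_range_iff.mpr (Nat.succ_ne_zero N))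
        fun k => ‖g1 k - g2 k‖ ^ 2) ≤
      ((f1 (x 0) - f2 (x 0)) - (f1 (x N) - f2 (x N))) /
        ((mu1 + mu2) / mu2 ^ 2 * N) := by
  have hμ2 : mu2 < 0 := neg_pos.mp h2
  have hcond := mul_add_lt_sq_of_inv_add_inv_add_inv_pos (by linarith) hμ2 h6
    ((le_max_right _ _).trans_lt h7)
  have hstep : ∀ k < N, (mu1 + mu2) * ‖g1 (k + 1) - g2 (k + 1)‖ ^ 2 ≤
      2 * mu2 ^ 2 * (f1 (x k) - f2 (x k)) - 2 * mu2 ^ 2 * (f1 (x (k + 1)) - f2 (x (k + 1))) := by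
    intro k hk
    rw [← mul_sub, hdca k hk]
    exact dca_descent_step h2up (by linarith) hμ2.le h5 hcond.le (hdca k hk ▸ hg1 (k + 1) hk)
      (hg2 k hk.le) (hg2 (k + 1) hk)
  have hsum := mul_inf'_le_of_forall_mul_le_sub (by linarith) (fun k => ‖g1 k - g2 k‖ ^ 2)
    (fun k => 2 * mu2 ^ 2 * (f1 (x k) - f2 (x k))) hstep
  have hNpos : (0 : ℝ) < N := by exact_mod_cast hN
  have hsq : 0 < mu2 ^ 2 := sq_pos_of_neg hμ2
  set m := (Finset.range (N + 1)).inf' (Finset.nonempty_range_iff.mpr (Nat.succ_ne_zero N))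
    fun k => ‖g1 k - g2 k‖ ^ 2
  rw [le_div_iff₀ (mul_pos (div_pos (by linarith) hsq) hNpos)]
  calc 1 / 2 * m * ((mu1 + mu2) / mu2 ^ 2 * N) = (mu1 + mu2) * N * m / (2 * mu2 ^ 2) := by
        field_simp
    _ ≤ _ := by
        rw [div_le_iff₀ (by linarith)]
        linarith

/-- DCA sublinear rate, regime p5. -/
theorem dca_rate_p5
    (mu1 mu2 L1 L2 : ℝ)
    (h1 : -mu2 < mu1) (h2 : 0 < -mu2) (h3 : mu2 < L1)
    (h4 : mu1 < L1) (h5 : mu2 < L2) (h6 : 0 < L2)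
    (h7 : max ((1 / L1) * (2 + L2 / mu2)) 0 < 1 / mu1 + 1 / mu2 + 1 / L2)
    (f1 f2 : H → ℝ)
    (h1lo : HasLowerCurvature mu1 f1) (h1up : HasUpperCurvature L1 f1)
    (h2lo : HasLowerCurvature mu2 f2) (h2up : HasUpperCurvature L2 f2)
    (N : ℕ) (hN : 1 ≤ N) (x g1 g2 : ℕ → H)
    (hg1 : ∀ k ≤ N, IsSubgradient mu1 f1 (x k) (g1 k))
    (hg2 : ∀ k ≤ N, IsSubgradient mu2 f2 (x k) (g2 k))
    (hdca : ∀ k < N, g1 (k + 1) = g2 k) :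
    ((1 : ℝ) / 2) * ((Finset.range (N + 1)).inf' (Finset.nonempty_range_iff.mpr (Nat.succ_ne_zero N))
        fun k => ‖g1 k - g2 k‖ ^ 2) ≤
      ((f1 (x 0) - f2 (x 0)) - (f1 (x N) - f2 (x N))) /
        ((mu1 + mu2) / mu2 ^ 2 * N) :=
  dca_rate_p5_general mu1 mu2 L1 L2 h1 h2 h5 h6 h7 f1 f2 h2up N hN x g1 g2 hg1 hg2 hdca
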